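/- arXiv:2206.11200 — 3 statements merged into one kernel-verified Lean document; each statement's English description precedes it below -/
import Mathlib

section
/- Let p and q be coprime positive integers with q odd, and assume p > q if p is odd. Let t and u be the pinch integers of (p,q). Then the integers p − 2t and q − 2u are coprime, i.e., gcd(|p − 2t|, |q − 2u|) = 1. (This expresses arithmetically that the result of a pinch move on a torus knot is again a torus knot.) -/
def PinchInts (p q t u : ℤ) : Prop :=
  0 ≤ t ∧ t ≤ p - 1 ∧ 0 ≤ u ∧ u ≤ q - 1 ∧
    q * t ≡ -1 [ZMOD p] ∧ p * u ≡ 1 [ZMOD q]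

/-!
The congruences make `p u - q t - 1` divisible by both `p` and `q`, hence by `p q`, while the
bounds on `t` and `u` put it in `(-p q, p q)` as soon as `q ≠ 1`; so `p u - q t = 1`.
Then `u (p - 2t) - t (q - 2u) = p u - q t = 1` is a Bézout relation for `p - 2t` and `q - 2u`;
if `q = 1` then `u = 0` and `q - 2u = 1`.
-/

namespace PinchInts

variable {p q t u : ℤ}

theorem isCoprime (h : PinchInts p q t u) : IsCoprime p q := by
  obtain ⟨-, -, -, -, hqt, -⟩ := h
  obtain ⟨a, ha⟩ := hqt.dvd
  exact ⟨-a, -t, by linear_combination ha⟩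

theorem mul_dvd_mul_sub_mul_sub_one (h : PinchInts p q t u) : p * q ∣ p * u - q * t - 1 := by
  have hcop := h.isCoprime
  obtain ⟨-, -, -, -, hqt, hpu⟩ := h
  refine hcop.mul_dvd ?_ ?_
  · convert (dvd_mul_right p u).add hqt.dvd using 1
    ring
  · convert hpu.dvd.neg_right.sub (dvd_mul_right q t) using 1
    ring

theorem mul_sub_mul_eq_one_or_eq_one (h : PinchInts p q t u) : p * u - q * t = 1 ∨ q = 1 := by
  refine or_iff_not_imp_right.2 fun hq1 => ?_
  have hdvd := h.mul_dvd_mul_sub_mul_sub_one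
  obtain ⟨ht0, htp, hu0, huq, -, -⟩ := h
  have hq2 : 2 ≤ q := by omega
  have hpu : p * u ≤ p * (q - 1) := mul_le_mul_of_nonneg_left huq (by omega)
  have hqt : q * t ≤ q * (p - 1) := mul_le_mul_of_nonneg_left htp (by omega)
  have hpu0 : 0 ≤ p * u := mul_nonneg (by omega) hu0
  have hqt0 : 0 ≤ q * t := mul_nonneg (by omega) ht0
  have hsmall : |p * u - q * t - 1| < p * q := by
    rw [abs_lt]
    constructor <;> linarith
  linarith [Int.eq_zero_of_abs_lt_dvd hdvd hsmall]

end PinchInts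

theorem pinch_coprime_general (p q t u : ℤ)
    (htu : PinchInts p q t u) :
    Int.gcd (p - 2 * t) (q - 2 * u) = 1 := by
  rcases htu.mul_sub_mul_eq_one_or_eq_one with hbezout | rfl
  · exact Int.isCoprime_iff_gcd_eq_one.mp ⟨u, -t, by linear_combination hbezout⟩
  · obtain ⟨-, -, hu0, hu1, -, -⟩ := htu
    obtain rfl : u = 0 := by omega
    simp

/-- The parameters `p - 2t` and `q - 2u` produced by a pinch move are coprime:
the result of a pinch move on a torus knot is again a torus knot. -/
theorem pinch_coprime (p q t u : ℤ)
    (hp : 0 < p) (hq : 0 < q) (hcop : Int.gcd p q = 1)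
    (hqodd : Odd q) (hpodd : Odd p → q < p)
    (htu : PinchInts p q t u) :
    Int.gcd (p - 2 * t) (q - 2 * u) = 1 :=
  pinch_coprime_general p q t u htu
end

section
/- Let p and q be coprime positive integers with q odd, and assume p > q if p is odd. Then there exist a natural number n and a pinch sequence (p_k, q_k), k = 0, …, n, from (p,q) whose terminal pair satisfies q_0 = 1. (This expresses arithmetically that repeatedly applying pinch moves transforms any torus knot T(p,q) into an unknot T(p_0, 1).) -/
/-- `(P k, Q k)`, `k = 0, …, n`, is a pinch sequence from `(p, q)`:
the pairs are nonnegative, `(P n, Q n) = (p, q)`, and each pair with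
`1 ≤ k ≤ n` has `P k ≥ 2`, `Q k ≥ 3` odd, `gcd (P k) (Q k) = 1`,
`P k > Q k` if `P k` is odd, and `(P (k-1), Q (k-1))` equals
`(|P k - 2 t|, |Q k - 2 u|)` or its swap, where `t, u` are the pinch
integers of `(P k, Q k)`. -/
def IsPinchSeq (n : ℕ) (P Q : ℕ → ℤ) (p q : ℤ) : Prop :=
  P n = p ∧ Q n = q ∧ (∀ k ≤ n, 0 ≤ P k ∧ 0 ≤ Q k) ∧
    ∀ k, 1 ≤ k → k ≤ n →
      2 ≤ P k ∧ 3 ≤ Q k ∧ Odd (Q k) ∧ Int.gcd (P k) (Q k) = 1 ∧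
        (Odd (P k) → Q k < P k) ∧
        ∃ t u, PinchInts (P k) (Q k) t u ∧
          ((P (k - 1) = |P k - 2 * t| ∧ Q (k - 1) = |Q k - 2 * u|) ∨
           (P (k - 1) = |Q k - 2 * u| ∧ Q (k - 1) = |P k - 2 * t|))

structure IsAdmissible (p q : ℤ) : Prop where
  pos_left : 0 < p
  pos_right : 0 < q
  gcd_eq_one : Int.gcd p q = 1
  odd_right : Odd q
  lt_of_odd_left : Odd p → q < p

def IsPinchMove (p q p' q' : ℤ) : Prop :=
  ∃ t u, PinchInts p q t u ∧
    ((p' = |p - 2 * t| ∧ q' = |q - 2 * u|) ∨ (p' = |q - 2 * u| ∧ q' = |p - 2 * t|))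

theorem exists_pinchInts {p q : ℤ} (hp : 0 < p) (hq : 0 < q) (hcop : IsCoprime p q) :
    ∃ t u, PinchInts p q t u := by
  obtain ⟨a, b, hab⟩ := hcop
  refine ⟨(-b) % p, a % q, Int.emod_nonneg _ hp.ne',
    by linarith [Int.emod_lt_of_pos (-b) hp], Int.emod_nonneg _ hq.ne',
    by linarith [Int.emod_lt_of_pos a hq], ?_, ?_⟩
  · calc q * ((-b) % p) ≡ q * -b [ZMOD p] := (Int.mod_modEq _ _).mul_left _
      _ = -1 + p * a := by linear_combination -hab
      _ ≡ -1 [ZMOD p] := Int.modEq_add_fac_self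
  · calc p * (a % q) ≡ p * a [ZMOD q] := (Int.mod_modEq _ _).mul_left _
      _ = 1 + q * -b := by linear_combination hab
      _ ≡ 1 [ZMOD q] := Int.modEq_add_fac_self

namespace PinchInts

variable {p q t u : ℤ}

theorem mul_sub_mul_eq_one (h : PinchInts p q t u) (hq : 2 ≤ q) : p * u - q * t = 1 := by
  have hcop := h.isCoprime
  obtain ⟨ht0, htp, hu0, huq, hqt, hpu⟩ := h
  have hpq : p * q ∣ p * u - q * t - 1 := by
    refine hcop.mul_dvd ?_ ?_
    · convert (dvd_mul_right p u).add hqt.dvd using 1; ring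
    · convert (dvd_neg.2 hpu.dvd).sub (dvd_mul_right q t) using 1; ring
  have hqt0 : 0 ≤ q * t := mul_nonneg (by linarith) ht0
  have hqt1 : q * t ≤ q * (p - 1) := mul_le_mul_of_nonneg_left htp (by linarith)
  have hpu0 : 0 ≤ p * u := mul_nonneg (by linarith) hu0
  have hpu1 : p * u ≤ p * (q - 1) := mul_le_mul_of_nonneg_left huq (by linarith)
  have hzero : p * u - q * t - 1 = 0 :=
    Int.eq_zero_of_abs_lt_dvd hpq (abs_lt.2 ⟨by linarith, by linarith⟩)
  linarith

theorem pinched_cross (h : PinchInts p q t u) (hq : 2 ≤ q) :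
    q * (p - 2 * t) - p * (q - 2 * u) = 2 := by
  linear_combination 2 * h.mul_sub_mul_eq_one hq

theorem isCoprime_pinched (h : PinchInts p q t u) (hq : 2 ≤ q) (hodd : Odd q) :
    IsCoprime (p - 2 * t) (q - 2 * u) := by
  have hcop : IsCoprime (q * (p - 2 * t) + -p * (q - 2 * u)) (q - 2 * u) := by
    rw [show q * (p - 2 * t) + -p * (q - 2 * u) = 2 by linear_combination h.pinched_cross hq]
    exact Int.isCoprime_two_left.2 (hodd.sub_even (even_two_mul u))
  exact hcop.of_add_mul_right_left.of_mul_left_right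

theorem abs_pinched_right_lt (h : PinchInts p q t u) (hq : 2 ≤ q) : |q - 2 * u| < q := by
  have hcross := h.mul_sub_mul_eq_one hq
  obtain ⟨ht0, -, hu0, huq, -, -⟩ := h
  have hu1 : 1 ≤ u := by
    by_contra hu
    have : u = 0 := by omega
    subst this
    nlinarith
  exact abs_lt.2 ⟨by linarith, by linarith⟩

end PinchInts

namespace IsAdmissible

variable {p q : ℤ}

theorem two_le_left (h : IsAdmissible p q) (hq : 3 ≤ q) : 2 ≤ p := by
  by_contra hp
  have hp1 : p = 1 := by linarith [h.pos_left]
  linarith [h.lt_of_odd_left (hp1 ▸ odd_one)]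

theorem three_le_right (h : IsAdmissible p q) (hq : q ≠ 1) : 3 ≤ q := by
  obtain ⟨k, hk⟩ := h.odd_right
  have := h.pos_right
  omega

theorem or_swap_of_isCoprime {a b : ℤ} (ha : 0 < a) (hb : 3 ≤ b) (hodd : Odd b)
    (hcop : IsCoprime a b) : IsAdmissible a b ∨ (IsAdmissible b a ∧ a < b) := by
  have hgcd := Int.isCoprime_iff_gcd_eq_one.1 hcop
  by_cases hswap : Odd a ∧ a < b
  · exact Or.inr ⟨⟨by omega, ha, Int.gcd_comm a b ▸ hgcd, hswap.1, fun _ => hswap.2⟩, hswap.2⟩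
  · refine Or.inl ⟨ha, by omega, hgcd, hodd, fun hao => ?_⟩
    have hne : a ≠ b := by
      rintro rfl
      rcases Int.isUnit_iff.1 (isCoprime_self.1 hcop) with rfl | rfl <;> omega
    have := not_and.1 hswap hao
    omega

theorem exists_pinchMove (h : IsAdmissible p q) (hq : 3 ≤ q) :
    ∃ p' q', IsPinchMove p q p' q' ∧ 0 ≤ p' ∧ (q' = 1 ∨ IsAdmissible p' q' ∧ q' < q) := by
  obtain ⟨t, u, hpin⟩ :=
    exists_pinchInts h.pos_left h.pos_right (Int.isCoprime_iff_gcd_eq_one.2 h.gcd_eq_one)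
  set a := p - 2 * t
  set b := q - 2 * u
  have hcross : q * a - p * b = 2 := hpin.pinched_cross (by omega)
  have hbq : |b| < q := hpin.abs_pinched_right_lt (by omega)
  have hodd : Odd |b| := odd_abs.2 (h.odd_right.sub_even (even_two_mul u))
  by_cases hb1 : |b| = 1
  · exact ⟨|a|, |b|, ⟨t, u, hpin, Or.inl ⟨rfl, rfl⟩⟩, abs_nonneg a, Or.inl hb1⟩
  have hb3 : 3 ≤ |b| := by
    obtain ⟨k, hk⟩ := hodd
    have := abs_nonneg b
    omega
  have ha : 0 < |a| := by
    refine abs_pos.2 fun ha0 => ?_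
    have hpb : |p * b| = 2 := by
      rw [show p * b = -2 by rw [ha0] at hcross; linarith]
      norm_num
    rw [abs_mul, abs_of_pos h.pos_left] at hpb
    nlinarith [h.pos_left]
  have hcop : IsCoprime |a| |b| := (hpin.isCoprime_pinched (by omega) h.odd_right).abs_abs
  rcases or_swap_of_isCoprime ha hb3 hodd hcop with hadm | ⟨hadm, hlt⟩
  · exact ⟨|a|, |b|, ⟨t, u, hpin, Or.inl ⟨rfl, rfl⟩⟩, abs_nonneg _, Or.inr ⟨hadm, hbq⟩⟩
  · exact ⟨|b|, |a|, ⟨t, u, hpin, Or.inr ⟨rfl, rfl⟩⟩, abs_nonneg _, Or.inr ⟨hadm, hlt.trans hbq⟩⟩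

end IsAdmissible

theorem isPinchSeq_zero {p : ℤ} (hp : 0 ≤ p) : IsPinchSeq 0 (fun _ => p) (fun _ => 1) p 1 :=
  ⟨rfl, rfl, fun _ _ => ⟨hp, zero_le_one⟩, fun _ _ _ => by omega⟩

theorem IsPinchSeq.snoc {n : ℕ} {P Q : ℕ → ℤ} {p q p' q' : ℤ} (hseq : IsPinchSeq n P Q p' q')
    (h : IsAdmissible p q) (hq : 3 ≤ q) (hmove : IsPinchMove p q p' q') :
    IsPinchSeq (n + 1) (fun k => if k ≤ n then P k else p) (fun k => if k ≤ n then Q k else q)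
      p q := by
  obtain ⟨hPn, hQn, hnonneg, hstep⟩ := hseq
  refine ⟨by simp, by simp, fun k _ => ?_, fun k hk1 hkn => ?_⟩
  · by_cases hk : k ≤ n
    · simpa only [if_pos hk] using hnonneg k hk
    · simpa only [if_neg hk] using ⟨h.pos_left.le, h.pos_right.le⟩
  · by_cases hk : k ≤ n
    · simpa only [if_pos hk, if_pos (k.sub_le 1 |>.trans hk)] using hstep k hk1 hk
    obtain rfl : k = n + 1 := by omega
    simp only [Nat.add_sub_cancel, if_neg (Nat.not_succ_le_self n), le_refl, if_true, hPn, hQn]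
    exact ⟨h.two_le_left hq, hq, h.odd_right, h.gcd_eq_one, h.lt_of_odd_left, hmove⟩

theorem IsAdmissible.exists_pinchSeq {p q : ℤ} (h : IsAdmissible p q) :
    ∃ (n : ℕ) (P Q : ℕ → ℤ), IsPinchSeq n P Q p q ∧ Q 0 = 1 := by
  rcases eq_or_ne q 1 with rfl | hq1
  · exact ⟨0, _, _, isPinchSeq_zero h.pos_left.le, rfl⟩
  have hq := h.three_le_right hq1
  obtain ⟨p', q', hmove, hp', hq'⟩ := h.exists_pinchMove hq
  obtain ⟨n, P, Q, hseq, hQ0⟩ : ∃ (n : ℕ) (P Q : ℕ → ℤ), IsPinchSeq n P Q p' q' ∧ Q 0 = 1 := by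
    rcases hq' with rfl | ⟨h', hlt⟩
    · exact ⟨0, _, _, isPinchSeq_zero hp', rfl⟩
    · exact h'.exists_pinchSeq
  exact ⟨n + 1, _, _, hseq.snoc h hq hmove, by simpa using hQ0⟩
termination_by q.toNat
decreasing_by omega

/-- Repeatedly applying pinch moves transforms any torus knot `T(p,q)` into an
unknot `T(p₀, 1)`: there is a pinch sequence from `(p, q)` ending with `q₀ = 1`. -/
theorem exists_pinch_sequence_to_unknot (p q : ℤ)
    (hp : 0 < p) (hq : 0 < q) (hcop : Int.gcd p q = 1)
    (hqodd : Odd q) (hpodd : Odd p → q < p) :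
    ∃ (n : ℕ) (P Q : ℕ → ℤ), IsPinchSeq n P Q p q ∧ Q 0 = 1 :=
  (IsAdmissible.mk hp hq hcop hqodd hpodd).exists_pinchSeq
end

section
/- Let (p_k, q_k), k = 0, …, n, be a pinch sequence from (p,q) with q_0 = 1. Then p_0 ≡ p·q + 2n (mod 4). (Since the pinch surface F(p,q) built from such a sequence has normal Euler number e(F(p,q)) = p_0 − pq and first Betti number b₁(F(p,q)) = n, this is the arithmetic form of the congruence e(F) ≡ 2·b₁(F) (mod 4) applied to pinch surfaces.) -/
lemma pinch_step (p q t u : ℤ) (hp : 2 ≤ p) (hq : 3 ≤ q) (hqo : Odd q)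
    (hco : Int.gcd p q = 1) (hpo : Odd p → q < p)
    (h : PinchInts p q t u) :
    |p - 2*t| * |q - 2*u| ≡ p*q + 2 [ZMOD 4] := by
  obtain ⟨ht0, ht1, hu0, hu1, hqt, hpu⟩ := h
  have hdqt : p ∣ -1 - q*t := hqt.dvd
  have hdpu : q ∣ 1 - p*u := hpu.dvd
  rw [← abs_mul]
  rcases Int.even_or_odd p with hpe | hod
  · -- p even
    obtain ⟨a, ha⟩ := hpe
    have h2 : (2:ℤ) ∣ -1 - q*t := dvd_trans ⟨a, by linarith⟩ hdqt
    obtain ⟨e, he⟩ := h2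
    obtain ⟨d, hd⟩ : Odd (q*t) := ⟨-e - 1, by linarith⟩
    rcases abs_cases ((p-2*t)*(q-2*u)) with ⟨h1, _⟩ | ⟨h1, _⟩ <;> rw [h1] <;>
      refine Int.modEq_iff_dvd.mpr ?_
    · exact ⟨a*u + d - t*u + 1, by linear_combination 2*u*ha + 2*hd⟩
    · exact ⟨a*q - a*u + t*u - d, by linear_combination (2*q - 2*u)*ha - 2*hd⟩
  · -- p odd
    have hqp : q < p := hpo hod
    have ht1' : 1 ≤ t := by
      rcases eq_or_lt_of_le ht0 with h0 | h0
      · exfalso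
        have h1 : p ∣ (-1 : ℤ) := by rw [← h0] at hdqt; simpa using hdqt
        have := Int.le_of_dvd one_pos (dvd_neg.mp h1)
        omega
      · omega
    have hu1' : 1 ≤ u := by
      rcases eq_or_lt_of_le hu0 with h0 | h0
      · exfalso
        have : q ∣ (1 : ℤ) := by rw [← h0] at hdpu; simpa using hdpu
        have := Int.le_of_dvd one_pos this
        omega
      · omega
    -- the key identity p*u + q*(p-t) = p*q + 1
    have hpd : p ∣ p*u + q*(p-t) - 1 := by
      have : p*u + q*(p-t) - 1 = p*(u + q) + (-1 - q*t) := by ring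
      rw [this]; exact dvd_add ⟨u + q, rfl⟩ hdqt
    have hqd : q ∣ p*u + q*(p-t) - 1 := by
      have : p*u + q*(p-t) - 1 = q*(p - t) - (1 - p*u) := by ring
      rw [this]; exact dvd_sub ⟨p - t, rfl⟩ hdpu
    have hcop : IsCoprime p q := Int.isCoprime_iff_gcd_eq_one.mpr hco
    obtain ⟨k, hk⟩ := hcop.mul_dvd hpd hqd
    have hpq0 : 0 < p*q := by positivity
    have hb1 : p*1 ≤ p*u := by
      apply mul_le_mul_of_nonneg_left hu1'; linarith
    have hb2 : p*u ≤ p*(q-1) := by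
      apply mul_le_mul_of_nonneg_left hu1; linarith
    have hb3 : q*1 ≤ q*(p-t) := by
      apply mul_le_mul_of_nonneg_left (by omega); linarith
    have hb4 : q*(p-t) ≤ q*(p-1) := by
      apply mul_le_mul_of_nonneg_left (by omega); linarith
    have hk1 : k = 1 := by nlinarith
    rw [hk1, mul_one] at hk
    have hX : p*u + q*(p-t) - 1 = p*q := hk
    -- sign analysis: p - 2t and q - 2u are nonzero of equal sign
    have hkey : p*(q - 2*u) = q*(p - 2*t) - 2 := by linear_combination -2*hX
    obtain ⟨c, hc⟩ : Odd (p - 2*t) := hod.sub_even (even_two_mul t)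
    have hprod : 0 < (p - 2*t)*(q - 2*u) := by
      rcases lt_trichotomy (p - 2*t) 0 with hs | hs | hs
      · have h5 : q*(p - 2*t) ≤ q * (-1) := by
          apply mul_le_mul_of_nonneg_left (by omega); linarith
        have h6 : p*(q - 2*u) < 0 := by linarith
        have h7 : q - 2*u < 0 := by nlinarith
        exact mul_pos_of_neg_of_neg hs h7
      · omega
      · have h5 : q * 1 ≤ q*(p - 2*t) := by
          apply mul_le_mul_of_nonneg_left (by omega); linarith
        have h6 : 0 < p*(q - 2*u) := by linarith
        have h7 : 0 < q - 2*u := by nlinarith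
        exact mul_pos hs h7
    rw [abs_of_pos hprod]
    exact Int.modEq_iff_dvd.mpr ⟨p*q + 1 - q*(p-t) - t*u, by linear_combination 2*hX⟩

/-- Arithmetic form of `e(F) ≡ 2 b₁(F) (mod 4)` for pinch surfaces:
if a pinch sequence from `(p,q)` of length `n` ends with `q₀ = 1`,
then `p₀ ≡ pq + 2n (mod 4)`. -/
theorem pinch_sequence_mod_four (p q : ℤ) (n : ℕ) (P Q : ℕ → ℤ)
    (hseq : IsPinchSeq n P Q p q) (hQ0 : Q 0 = 1) :
    P 0 ≡ p * q + 2 * n [ZMOD 4] := by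
  obtain ⟨hPn, hQn, _, hstep⟩ := hseq
  have key : ∀ m, m ≤ n → P (n - m) * Q (n - m) ≡ p * q + 2 * m [ZMOD 4] := by
    intro m
    induction m with
    | zero =>
      intro _
      simp only [Nat.sub_zero, hPn, hQn, Nat.cast_zero, mul_zero, add_zero]
      rfl
    | succ m ih =>
      intro hm
      have hmn : m ≤ n := by omega
      set k := n - m with hk
      have hk1 : 1 ≤ k := by omega
      have hkn : k ≤ n := by omega
      have hsub : n - (m + 1) = k - 1 := by omega
      obtain ⟨hP2, hQ3, hQodd, hgcd, hlt, t, u, hpin, hor⟩ := hstep k hk1 hkn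
      have hs := pinch_step (P k) (Q k) t u hP2 hQ3 hQodd hgcd hlt hpin
      have hprev : P (k-1) * Q (k-1) = |P k - 2*t| * |Q k - 2*u| := by
        rcases hor with ⟨h1, h2⟩ | ⟨h1, h2⟩
        · rw [h1, h2]
        · rw [h1, h2]; ring
      have hih := ih hmn
      rw [hsub, hprev]
      calc |P k - 2*t| * |Q k - 2*u| ≡ P k * Q k + 2 [ZMOD 4] := hs
        _ ≡ (p * q + 2 * m) + 2 [ZMOD 4] := hih.add_right 2
        _ = p * q + 2 * (m + 1 : ℕ) := by push_cast; ring
  have h0 := key n le_rfl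
  simpa [hQ0] using h0
end
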